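/- For every finite group G and prime p, the hypercenter of the 𝒰_p-residual of G is contained in the terminal term of the upper 𝒰_p-norm series: Z_∞(G^{𝒰_p}) ≤ N^∞_{𝒰_p}(G). -/

import Mathlib

universe u

/-- A class of groups (a property of groups) in universe `u`. -/
abbrev GroupClass : Type (u + 1) := ∀ (H : Type u) [Group H], Prop

/-- A (finite) normal chain of `G`: a monotone chain of subgroups running from `⊥`
to `⊤`, all of whose terms are normal in `G`. -/
structure NormalChain (G : Type u) [Group G] : Type u where
  len : ℕ
  ser : Fin (len + 1) → Subgroup G
  mono : Monotone ser
  bot_eq : ser 0 = ⊥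
  top_eq : ser (Fin.last len) = ⊤
  normal : ∀ i, (ser i).Normal

namespace NormalChain

variable {G : Type u} [Group G] (S : NormalChain G)

/-- The order of the `i`-th factor `S.ser i.succ / S.ser i.castSucc` of the chain. -/
noncomputable def factorCard (i : Fin S.len) : ℕ :=
  (S.ser i.castSucc).relIndex (S.ser i.succ)

/-- The `i`-th factor of the chain (realized as the image of `S.ser i.succ` in
`G ⧸ S.ser i.castSucc`) satisfies the group property `P`. -/
def FactorProp (P : GroupClass.{u}) (i : Fin S.len) : Prop :=
  letI := S.normal i.castSucc
  P ↥(Subgroup.map (QuotientGroup.mk' (S.ser i.castSucc)) (S.ser i.succ))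

end NormalChain

/-- A finite group is `p`-nilpotent if it has a normal `p`-complement. -/
def IsPNilpotentGrp (p : ℕ) (G : Type u) [Group G] : Prop :=
  ∃ N : Subgroup G, N.Normal ∧ ¬ p ∣ Nat.card N ∧ ∃ k : ℕ, N.index = p ^ k

/-- A group is supersolvable if it has a normal series with cyclic factors. -/
def IsSupersolvableGrp (G : Type u) [Group G] : Prop :=
  ∃ S : NormalChain G, ∀ i, S.FactorProp (fun H inst => letI := inst; IsCyclic H) i

/-- A group is `p`-solvable if it has a normal series each of whose factors is a
`p`-group or a `p'`-group. -/
def IsPSolvableGrp (p : ℕ) (G : Type u) [Group G] : Prop :=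
  ∃ S : NormalChain G, ∀ i, (∃ k : ℕ, S.factorCard i = p ^ k) ∨ ¬ p ∣ S.factorCard i

/-- `N < M` is a chief factor of `G`: both are normal in `G` and no normal subgroup of
`G` lies strictly between them. -/
def IsChiefFactorOf (G : Type u) [Group G] (N M : Subgroup G) : Prop :=
  N.Normal ∧ M.Normal ∧ N < M ∧
    ∀ K : Subgroup G, K.Normal → N ≤ K → K ≤ M → K = N ∨ K = M

/-- A group is `p`-supersolvable if it is `p`-solvable and all its chief factors of
order divisible by `p` are (cyclic) of order `p`. -/
def IsPSupersolvableGrp (p : ℕ) (G : Type u) [Group G] : Prop :=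
  IsPSolvableGrp p G ∧
    ∀ N M : Subgroup G, IsChiefFactorOf G N M →
      p ∣ N.relIndex M → N.relIndex M = p

/-- The formation of supersolvable groups, as a class of groups. -/
def supersolvableClass : GroupClass.{u} := fun H inst => @IsSupersolvableGrp H inst

/-- The formation of `p`-supersolvable groups, as a class of groups. -/
def pSupersolvableClass (p : ℕ) : GroupClass.{u} := fun H inst => @IsPSupersolvableGrp p H inst

/-- `N` is normal in `G` with `G ⧸ N` in the class `C`. -/
def QuotientInClass (C : GroupClass.{u}) {G : Type u} [Group G] (N : Subgroup G) : Prop :=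
  ∃ _h : N.Normal, letI := _h; C (G ⧸ N)

/-- The `C`-residual `G^C` of `G`: the intersection of all normal subgroups of `G`
whose quotient lies in `C`. -/
def groupResidual (C : GroupClass.{u}) (G : Type u) [Group G] : Subgroup G :=
  sInf {N : Subgroup G | QuotientInClass C N}

/-- The `C`-residual `T^C` of a subgroup `T` of `G`, viewed as a subgroup of `G`. -/
def residualIn (C : GroupClass.{u}) {G : Type u} [Group G] (T : Subgroup G) : Subgroup G :=
  Subgroup.map T.subtype (groupResidual C ↥T)

/-- The weak norm `N_C(G, H) = ⋂_{T ≤ H} N_G(T^C)` of `H` in `G` with respect to `C`. -/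
def weakNorm (C : GroupClass.{u}) {G : Type u} [Group G] (H : Subgroup G) : Subgroup G :=
  ⨅ (T : Subgroup G) (_ : T ≤ H), Subgroup.normalizer (residualIn C T : Set G)

/-- The norm `N_C(G) = N_C(G, G)` of `G` with respect to `C`. -/
def grpNorm (C : GroupClass.{u}) (G : Type u) [Group G] : Subgroup G :=
  weakNorm C (⊤ : Subgroup G)

/-- `s` is the upper `C`-norm series of `G`: `s 0 = ⊥` and
`s (i+1) / s i = N_C(G / s i)`. -/
def IsUpperNormSeries (C : GroupClass.{u}) (G : Type u) [Group G]
    (s : ℕ → Subgroup G) : Prop :=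
  s 0 = ⊥ ∧ ∀ i : ℕ, ∃ h : (s i).Normal,
    s (i + 1) =
      (letI := h; Subgroup.comap (QuotientGroup.mk' (s i)) (grpNorm C (G ⧸ s i)))

/-- The hypercenter of a group: the terminal term of the upper central series. -/
def hyperCenter (G : Type u) [Group G] : Subgroup G :=
  ⨆ n : ℕ, Subgroup.upperCentralSeries G n

/-- The `p`-Fitting length of `G`: the length of a shortest normal chain of `G`
all of whose factors are `p`-nilpotent. -/
noncomputable def pFittingLength (p : ℕ) (G : Type u) [Group G] : ℕ :=
  sInf {n : ℕ | ∃ S : NormalChain G, S.len = n ∧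
    ∀ i, S.FactorProp (fun H inst => @IsPNilpotentGrp p H inst) i}

/-- The Fitting length of `G`: the length of a shortest normal chain of `G`
all of whose factors are nilpotent. -/
noncomputable def fittingLength (G : Type u) [Group G] : ℕ :=
  sInf {n : ℕ | ∃ S : NormalChain G, S.len = n ∧
    ∀ i, S.FactorProp (fun H inst => @Group.IsNilpotent H inst) i}

/-- The `p`-length of `G`: the least number of `p`-factors in a normal chain of `G`
each of whose factors is a `p`-group or a `p'`-group. -/
noncomputable def pLength (p : ℕ) (G : Type u) [Group G] : ℕ :=
  sInf {n : ℕ | ∃ S : NormalChain G,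
    (∀ i, (∃ k : ℕ, S.factorCard i = p ^ k) ∨ ¬ p ∣ S.factorCard i) ∧
    Nat.card {i : Fin S.len // p ∣ S.factorCard i} ≤ n}

/-!
Write `R = G^{𝒰_p}` and let `s` be the upper `𝒰_p`-norm series. We show `Z_k(R) ≤ s k` by
induction on `k`. Since `𝒰_p` is a subgroup-closed formation, `G ⧸ R` is `p`-supersolvable and,
in `Ḡ = G ⧸ s k`, the residual of every subgroup lies in the image `R̄` of `R`. An element of
`Z_{k+1}(R)` has all its commutators with `R` in `Z_k(R) ≤ s k`, so its image centralizes `R̄`,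
hence normalizes every such residual, i.e. lies in `N_{𝒰_p}(Ḡ)`.

The closure properties of `𝒰_p` come from describing finite `p`-supersolvable groups as those
with a normal series whose factors have order `p` or prime to `p`: a chief series is such a
series, and conversely the order of any chief factor divides the order of some factor of it.
-/

open Subgroup QuotientGroup Relation

namespace Subgroup

variable {G G' : Type*} [Group G] [Group G']

theorem relIndex_dvd_of_le_right {A K B : Subgroup G} [A.Normal] (h : K ≤ B) :
    A.relIndex K ∣ A.relIndex B := by
  rw [← relIndex_sup_left K A, ← relIndex_sup_left B A]
  exact Dvd.intro _ (relIndex_mul_relIndex _ _ _ le_sup_left (sup_le_sup_left h A))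

theorem relIndex_map_dvd (f : G →* G') (A B : Subgroup G) :
    (A.map f).relIndex (B.map f) ∣ A.relIndex B := by
  rw [← relIndex_comap, comap_map_eq]
  exact relIndex_dvd_of_le_left B le_sup_left

theorem relIndex_comap_dvd (f : G' →* G) {A : Subgroup G} [A.Normal] (B : Subgroup G) :
    (A.comap f).relIndex (B.comap f) ∣ A.relIndex B := by
  rw [relIndex_comap, map_comap_eq]
  exact relIndex_dvd_of_le_right inf_le_right

theorem relIndex_inf_inf_dvd (N : Subgroup G) {A : Subgroup G} [A.Normal] (B : Subgroup G) :
    (N ⊓ A).relIndex (N ⊓ B) ∣ A.relIndex B := by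
  rw [← inf_relIndex_right, ← inf_inf_distrib_left, inf_left_comm, inf_relIndex_right]
  exact relIndex_dvd_of_le_right inf_le_right

theorem relIndex_dvd_of_inf_le_of_sup_inf_eq {N M X B : Subgroup G} [N.Normal] [X.Normal]
    (hX : X ⊓ M ≤ N) (hB : N ⊔ B ⊓ M = M) : N.relIndex M ∣ X.relIndex B :=
  calc N.relIndex M = N.relIndex (N ⊔ B ⊓ M) := by rw [hB]
    _ = N.relIndex (B ⊓ M) := relIndex_sup_left _ N
    _ ∣ (X ⊓ (B ⊓ M)).relIndex (B ⊓ M) :=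
      relIndex_dvd_of_le_left _ ((inf_le_inf_left X inf_le_right).trans hX)
    _ = X.relIndex (B ⊓ M) := inf_relIndex_right X _
    _ ∣ X.relIndex B := relIndex_dvd_of_le_right inf_le_left

end Subgroup

theorem Relation.ReflTransGen.exists_relSeries {α : Type*} {r : α → α → Prop} {a b : α}
    (h : ReflTransGen r a b) :
    ∃ s : RelSeries {x : α × α | r x.1 x.2}, s.head = a ∧ s.last = b := by
  induction h with
  | refl => exact ⟨.singleton _ a, RelSeries.head_singleton a, RelSeries.last_singleton a⟩
  | tail _ hbc ih =>
    obtain ⟨s, hs, hs'⟩ := ih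
    exact ⟨s.snoc _ (hs' ▸ hbc), by simpa using hs, by simp⟩

section NormalSeries

variable {G G' : Type*} [Group G] [Group G'] {Q : ℕ → Prop}

def NormalStep (Q : ℕ → Prop) (A B : Subgroup G) : Prop :=
  A.Normal ∧ B.Normal ∧ A ≤ B ∧ Q (A.relIndex B)

abbrev HasNormalSeries (Q : ℕ → Prop) : Subgroup G → Subgroup G → Prop :=
  ReflTransGen (NormalStep Q)

theorem HasNormalSeries.map (hQ : ∀ ⦃d m : ℕ⦄, d ∣ m → Q m → Q d) (f : G →* G')
    (hf : Function.Surjective f) {A B : Subgroup G} (h : HasNormalSeries Q A B) :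
    HasNormalSeries Q (A.map f) (B.map f) :=
  h.lift _ fun _ _ ⟨hA, hB, hle, hAB⟩ =>
    ⟨hA.map f hf, hB.map f hf, map_mono hle, hQ (relIndex_map_dvd f _ _) hAB⟩

theorem HasNormalSeries.comap (hQ : ∀ ⦃d m : ℕ⦄, d ∣ m → Q m → Q d) (f : G' →* G)
    {A B : Subgroup G} (h : HasNormalSeries Q A B) :
    HasNormalSeries Q (A.comap f) (B.comap f) :=
  h.lift _ fun _ _ ⟨hA, hB, hle, hAB⟩ =>
    ⟨hA.comap f, hB.comap f, comap_mono hle,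
      hQ (haveI := hA; relIndex_comap_dvd f _) hAB⟩

theorem HasNormalSeries.inf_left (hQ : ∀ ⦃d m : ℕ⦄, d ∣ m → Q m → Q d) {N : Subgroup G}
    (hN : N.Normal) {A B : Subgroup G} (h : HasNormalSeries Q A B) :
    HasNormalSeries Q (N ⊓ A) (N ⊓ B) :=
  h.lift _ fun _ _ ⟨hA, hB, hle, hAB⟩ =>
    ⟨(haveI := hA; normal_inf_normal N _), (haveI := hB; normal_inf_normal N _),
      inf_le_inf_left N hle, hQ (haveI := hA; relIndex_inf_inf_dvd N _) hAB⟩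

theorem HasNormalSeries.exists_normalChain {G : Type u} [Group G]
    (h : HasNormalSeries Q (⊥ : Subgroup G) ⊤) :
    ∃ S : NormalChain G, ∀ i, Q (S.factorCard i) := by
  obtain ⟨s, hs, hs'⟩ := h.exists_relSeries
  refine ⟨⟨s.length, s, Fin.monotone_iff_le_succ.mpr fun i => (s.step i).2.2.1, hs, hs', ?_⟩,
    fun i => (s.step i).2.2.2⟩
  intro i
  induction i using Fin.lastCases with
  | last => exact (congrArg Normal hs').mpr inferInstance
  | cast i => exact (s.step i).1

theorem IsChiefFactorOf.relIndex_of_hasNormalSeries (hQ : ∀ ⦃d m : ℕ⦄, d ∣ m → Q m → Q d)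
    {N M A B : Subgroup G} (hNM : IsChiefFactorOf G N M) (h : HasNormalSeries Q A B)
    (hA : A ⊓ M ≤ N) (hB : N ⊔ B ⊓ M = M) : Q (N.relIndex M) := by
  obtain ⟨hN, hM, hlt, hmin⟩ := hNM
  -- Each `N ⊔ C ⊓ M` along the series is `N` or `M`; the index of `M / N` divides the index of
  -- the step where it jumps from `N` to `M`.
  induction h with
  | refl => exact absurd (hB.symm.trans (sup_eq_left.mpr hA)) hlt.ne'
  | @tail X B _ hXB ih =>
    obtain ⟨hX, -, -, hQX⟩ := hXB
    by_cases hXM : X ⊓ M ≤ N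
    · exact hQ (relIndex_dvd_of_inf_le_of_sup_inf_eq hXM hB) hQX
    · refine ih ((hmin _ (sup_normal N (X ⊓ M)) le_sup_left
        (sup_le hlt.le inf_le_right)).resolve_left fun h => hXM ?_)
      exact h ▸ le_sup_right

theorem exists_chiefSeries [Finite G] : ReflTransGen (IsChiefFactorOf G) ⊥ ⊤ := by
  suffices ∀ N : Subgroup G, N.Normal → ReflTransGen (IsChiefFactorOf G) ⊥ N from
    this ⊤ inferInstance
  intro N
  induction N using WellFoundedLT.induction with
  | _ N ih =>
    intro hN
    rcases eq_or_ne N ⊥ with rfl | hN'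
    · exact .refl
    obtain ⟨M, ⟨hM, hMN⟩, hmax⟩ :=
      Set.toFinite {K : Subgroup G | K.Normal ∧ K < N} |>.exists_maximal
        ⟨⊥, inferInstance, bot_lt_iff_ne_bot.mpr hN'⟩
    refine (ih M hMN hM).tail ⟨hM, hN, hMN, fun K hK hMK hKN => ?_⟩
    rcases hKN.lt_or_eq with hKN | rfl
    · exact .inl (hmax ⟨hK, hKN⟩ hMK |>.antisymm hMK)
    · exact .inr rfl

end NormalSeries

section PSupersolvable

variable {p : ℕ}

def IsPOrPPrime (p m : ℕ) : Prop := m = p ∨ ¬ p ∣ m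

theorem IsPOrPPrime.of_dvd (hp : p.Prime) ⦃d m : ℕ⦄ (hdm : d ∣ m) (hm : IsPOrPPrime p m) :
    IsPOrPPrime p d := by
  rcases hm with rfl | hm
  · rcases (Nat.dvd_prime hp).mp hdm with rfl | rfl
    · exact .inr hp.not_dvd_one
    · exact .inl rfl
  · exact .inr fun h => hm (h.trans hdm)

variable {G : Type u} [Group G]

theorem isPSupersolvableGrp_of_hasNormalSeries (hp : p.Prime)
    (h : HasNormalSeries (IsPOrPPrime p) (⊥ : Subgroup G) ⊤) : IsPSupersolvableGrp p G := by
  refine ⟨?_, fun N M hNM hpNM => ?_⟩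
  · obtain ⟨S, hS⟩ := h.exists_normalChain
    exact ⟨S, fun i => (hS i).imp_left fun h => ⟨1, h.trans (pow_one p).symm⟩⟩
  · have hB : N ⊔ ⊤ ⊓ M = M := by rw [top_inf_eq, sup_eq_right.mpr hNM.2.2.1.le]
    exact (hNM.relIndex_of_hasNormalSeries (IsPOrPPrime.of_dvd hp) h (by simp) hB)
      |>.resolve_right (not_not.mpr hpNM)

theorem hasNormalSeries_of_isPSupersolvableGrp [Finite G] (h : IsPSupersolvableGrp p G) :
    HasNormalSeries (IsPOrPPrime p) (⊥ : Subgroup G) ⊤ :=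
  ReflTransGen.mono (fun N M hNM =>
    ⟨hNM.1, hNM.2.1, hNM.2.2.1.le, (em (p ∣ _)).imp (h.2 N M hNM) id⟩) _ _ exists_chiefSeries

theorem quotientInClass_pSupersolvableClass_iff [Finite G] (hp : p.Prime) {N : Subgroup G} :
    QuotientInClass (pSupersolvableClass p) N ↔
      N.Normal ∧ HasNormalSeries (IsPOrPPrime p) N ⊤ := by
  refine ⟨fun ⟨hN, hq⟩ => ⟨hN, ?_⟩, fun ⟨hN, h⟩ => ⟨hN, ?_⟩⟩
  · simpa using (hasNormalSeries_of_isPSupersolvableGrp hq).comap (IsPOrPPrime.of_dvd hp) (mk' N)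
  · refine isPSupersolvableGrp_of_hasNormalSeries hp ?_
    simpa [map_top_of_surjective _ (mk'_surjective N)] using
      h.map (IsPOrPPrime.of_dvd hp) (mk' N) (mk'_surjective N)

end PSupersolvable

section Residual

variable {G : Type u} [Group G] {p : ℕ}

theorem QuotientInClass.inf_pSupersolvableClass [Finite G] (hp : p.Prime) {N₁ N₂ : Subgroup G}
    (h₁ : QuotientInClass (pSupersolvableClass p) N₁)
    (h₂ : QuotientInClass (pSupersolvableClass p) N₂) :
    QuotientInClass (pSupersolvableClass p) (N₁ ⊓ N₂) := by
  rw [quotientInClass_pSupersolvableClass_iff hp] at h₁ h₂ ⊢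
  obtain ⟨hN₁, h₁⟩ := h₁
  obtain ⟨hN₂, h₂⟩ := h₂
  refine ⟨normal_inf_normal N₁ N₂, .trans ?_ h₁⟩
  simpa using h₂.inf_left (IsPOrPPrime.of_dvd hp) hN₁

theorem QuotientInClass.subgroupOf_pSupersolvableClass [Finite G] (hp : p.Prime)
    {N : Subgroup G} (h : QuotientInClass (pSupersolvableClass p) N) (T : Subgroup G) :
    QuotientInClass (pSupersolvableClass p) (N.subgroupOf T) := by
  rw [quotientInClass_pSupersolvableClass_iff hp] at h ⊢
  obtain ⟨hN, h⟩ := h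
  exact ⟨hN.subgroupOf T, by simpa using h.comap (IsPOrPPrime.of_dvd hp) T.subtype⟩

theorem QuotientInClass.map_pSupersolvableClass [Finite G] (hp : p.Prime) {G' : Type u}
    [Group G'] [Finite G'] {f : G →* G'} (hf : Function.Surjective f) {N : Subgroup G}
    (h : QuotientInClass (pSupersolvableClass p) N) :
    QuotientInClass (pSupersolvableClass p) (N.map f) := by
  rw [quotientInClass_pSupersolvableClass_iff hp] at h ⊢
  obtain ⟨hN, h⟩ := h
  refine ⟨hN.map f hf, ?_⟩
  simpa [map_top_of_surjective f hf] using h.map (IsPOrPPrime.of_dvd hp) f hf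

variable {C : GroupClass.{u}}

theorem quotientInClass_groupResidual [Finite G] (htop : QuotientInClass C (⊤ : Subgroup G))
    (hinf : ∀ N₁ N₂ : Subgroup G, QuotientInClass C N₁ → QuotientInClass C N₂ →
      QuotientInClass C (N₁ ⊓ N₂)) :
    QuotientInClass C (groupResidual C G) := by
  have hS := Set.toFinite {N : Subgroup G | QuotientInClass C N}
  rw [groupResidual, ← hS.coe_toFinset, ← Finset.inf_id_eq_sInf]
  exact Finset.inf_induction htop (fun N₁ h₁ N₂ h₂ => hinf N₁ N₂ h₁ h₂)
    fun N hN => hS.mem_toFinset.mp hN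

theorem residualIn_le_of_quotientInClass {R T : Subgroup G}
    (h : QuotientInClass C (R.subgroupOf T)) : residualIn C T ≤ R :=
  calc residualIn C T ≤ (R.subgroupOf T).map T.subtype := map_mono (sInf_le h)
    _ = R ⊓ T := subgroupOf_map_subtype R T
    _ ≤ R := inf_le_left

theorem centralizer_le_grpNorm {R : Subgroup G} (hR : ∀ T : Subgroup G, residualIn C T ≤ R) :
    centralizer (R : Set G) ≤ grpNorm C G :=
  le_iInf₂ fun T _ => (centralizer_le (hR T)).trans (centralizer_le_normalizer _)

end Residual

open scoped commutatorElement in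
theorem map_mem_centralizer_of_mem_upperCentralSeries_succ {G G' : Type*} [Group G] [Group G']
    (f : G →* G') {R : Subgroup G} {k : ℕ}
    (hk : (Subgroup.upperCentralSeries R k).map R.subtype ≤ f.ker) {y : R}
    (hy : y ∈ Subgroup.upperCentralSeries R (k + 1)) : f y ∈ centralizer (R.map f : Set G') := by
  rintro _ ⟨r, hr, rfl⟩
  have hyr : f (⁅(y : G), r⁆ : G) = 1 :=
    hk ⟨_, Subgroup.mem_upperCentralSeries_succ_iff.mp hy ⟨r, hr⟩, rfl⟩
  rw [map_commutatorElement, commutatorElement_eq_one_iff_commute] at hyr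
  exact hyr.eq.symm

theorem IsUpperNormSeries.le_succ {C : GroupClass.{u}} {G : Type u} [Group G]
    {s : ℕ → Subgroup G} (hs : IsUpperNormSeries C G s) (i : ℕ) : s i ≤ s (i + 1) := by
  obtain ⟨_, hsucc⟩ := hs.2 i
  rw [hsucc]
  exact (ker_mk' (s i)).ge.trans (MonoidHom.ker_le_comap _ _)

theorem IsUpperNormSeries.map_upperCentralSeries_le {G : Type u} [Group G] [Finite G] {p : ℕ}
    (hp : p.Prime) {s : ℕ → Subgroup G} (hs : IsUpperNormSeries (pSupersolvableClass p) G s)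
    {R : Subgroup G} (hR : QuotientInClass (pSupersolvableClass p) R) (k : ℕ) :
    (Subgroup.upperCentralSeries R k).map R.subtype ≤ s k := by
  induction k with
  | zero => simp [hs.1]
  | succ k ih =>
    obtain ⟨_, hsucc⟩ := hs.2 k
    rw [hsucc]
    rintro _ ⟨y, hy, rfl⟩
    have hR' := hR.map_pSupersolvableClass hp (mk'_surjective (s k))
    exact centralizer_le_grpNorm
      (fun T => residualIn_le_of_quotientInClass (hR'.subgroupOf_pSupersolvableClass hp T))
      (map_mem_centralizer_of_mem_upperCentralSeries_succ _ (by rwa [ker_mk']) hy)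

/-- For every finite group `G` and prime `p`, the hypercenter of the
`𝒰_p`-residual of `G` is contained in the terminal term `N^∞_{𝒰_p}(G)` of the upper
`𝒰_p`-norm series of `G`. -/
theorem hyperCenter_residual_le_terminal_upperNormSeries
    {G : Type u} [Group G] [Finite G] {p : ℕ} (hp : p.Prime)
    (s : ℕ → Subgroup G) (hs : IsUpperNormSeries (pSupersolvableClass p) G s)
    (n : ℕ) (hstab : ∀ m : ℕ, n ≤ m → s m = s n) :
    Subgroup.map (groupResidual (pSupersolvableClass p) G).subtype
      (hyperCenter ↥(groupResidual (pSupersolvableClass p) G)) ≤ s n := by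
  have hR : QuotientInClass (pSupersolvableClass p) (groupResidual (pSupersolvableClass p) G) :=
    quotientInClass_groupResidual
      ((quotientInClass_pSupersolvableClass_iff hp).mpr ⟨inferInstance, .refl⟩)
      fun _ _ => QuotientInClass.inf_pSupersolvableClass hp
  have hle : ∀ k, s k ≤ s n := fun k =>
    (le_total k n).elim (monotone_nat_of_le_succ hs.le_succ ·) fun hnk => (hstab k hnk).le
  rw [hyperCenter, Subgroup.map_iSup]
  exact iSup_le fun k => (hs.map_upperCentralSeries_le hp hR k).trans (hle k)
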